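/- Let $\mathcal{C}$ be a braided monoidal category, $M$ an object acted on both sides, and suppose given: objects $A, B$, monomorphisms $\iota_A : A \hookrightarrow F_C$ and $\iota_B : B \hookrightarrow F_D$ into objects equipped with isomorphisms $b_{C,D} : F_C \otimes F_D \to F_D \otimes F_C$, and morphisms $f_A : F_C \to F_{C'}$, $f_B : F_D \to F_{D'}$ each factoring through $A$ respectively $B$ (i.e., $f_A = \iota_A' \circ p_A$ with $p_A \circ \iota_A = \mathrm{id}_A$, and similarly for $f_B$). If the naturality square $b_{C',D'} \circ (f_A \otimes f_B) = (f_B \otimes f_A) \circ b_{C,D}$ commutes, then the induced maps $\beta_{A,B}, \beta'_{A,B} : A \otimes B \to B \otimes A$ defined via $(C,D)$ and $(C',D')$ respectively are equal. -/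

import Mathlib

open CategoryTheory MonoidalCategory

namespace CategoryTheory

variable {𝒞 : Type*} [Category 𝒞]

theorem restriction_eq_of_naturality {X Y P Q P' Q' : 𝒞}
    {i : X ⟶ P} {j : Y ⟶ Q} {i' : X ⟶ P'} {j' : Y ⟶ Q'} [Mono j']
    {g : P ⟶ Q} {g' : P' ⟶ Q'} {u : P ⟶ P'} {v : Q ⟶ Q'}
    (hu : i ≫ u = i') (hv : j ≫ v = j') (hnat : u ≫ g' = g ≫ v)
    {β β' : X ⟶ Y} (hβ : i ≫ g = β ≫ j) (hβ' : i' ≫ g' = β' ≫ j') :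
    β = β' :=
  (cancel_mono j').mp <| calc
    β ≫ j' = (β ≫ j) ≫ v := by rw [← hv, Category.assoc]
    _ = i ≫ u ≫ g' := by rw [← hβ, Category.assoc, hnat]
    _ = β' ≫ j' := by rw [← hβ', ← hu, Category.assoc]

theorem tensorHom_comp_tensorHom_of_retraction [MonoidalCategory 𝒞] {A B X Y X' Y' : 𝒞}
    {ιA : A ⟶ X} {ιB : B ⟶ Y} {pA : X ⟶ A} {pB : Y ⟶ B}
    (hpA : ιA ≫ pA = 𝟙 A) (hpB : ιB ≫ pB = 𝟙 B) (ιA' : A ⟶ X') (ιB' : B ⟶ Y') :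
    (ιA ⊗ₘ ιB) ≫ (pA ≫ ιA' ⊗ₘ pB ≫ ιB') = ιA' ⊗ₘ ιB' := by
  rw [tensorHom_comp_tensorHom, reassoc_of% hpA, reassoc_of% hpB]

end CategoryTheory

/-- Well-definedness of the braiding on the neutral component (Proposition 1):
the morphism `β : A ⊗ B ⟶ B ⊗ A` induced via the lift `(C, D)` equals the one
induced via `(C', D')`, given the naturality of the bimodule associativity `b`
with respect to morphisms factoring through `A` and `B`. -/
theorem braiding_well_defined
    {𝒞 : Type*} [Category 𝒞] [MonoidalCategory 𝒞]
    {A B FC FD FC' FD' : 𝒞}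
    (ιA : A ⟶ FC) (ιA' : A ⟶ FC') (ιB : B ⟶ FD) (ιB' : B ⟶ FD')
    (b : FC ⊗ FD ⟶ FD ⊗ FC) (b' : FC' ⊗ FD' ⟶ FD' ⊗ FC')
    (pA : FC ⟶ A) (pB : FD ⟶ B)
    (hpA : ιA ≫ pA = 𝟙 A) (hpB : ιB ≫ pB = 𝟙 B)
    (fA : FC ⟶ FC') (fB : FD ⟶ FD')
    (hfA : fA = pA ≫ ιA') (hfB : fB = pB ≫ ιB')
    (hmono : Mono (ιB' ⊗ₘ ιA'))
    (hnat : (fA ⊗ₘ fB) ≫ b' = b ≫ (fB ⊗ₘ fA))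
    (β β' : A ⊗ B ⟶ B ⊗ A)
    (hβ : (ιA ⊗ₘ ιB) ≫ b = β ≫ (ιB ⊗ₘ ιA))
    (hβ' : (ιA' ⊗ₘ ιB') ≫ b' = β' ≫ (ιB' ⊗ₘ ιA')) :
    β = β' := by
  subst hfA hfB
  exact restriction_eq_of_naturality (tensorHom_comp_tensorHom_of_retraction hpA hpB ιA' ιB')
    (tensorHom_comp_tensorHom_of_retraction hpB hpA ιB' ιA') hnat hβ hβ'
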